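/- arXiv:2407.17682 — 2 statements merged into one kernel-verified Lean document; each statement's English description precedes it below -/
import Mathlib

section
/- Let X be a finite nonempty set, E ⊆ X × X strongly connected, C, F_1, …, F_K : E → ℝ with F_1, …, F_K linearly independent modulo N, let 𝔈 be the exponential family generated by C, F_1, …, F_K, and let μ_1, …, μ_K ∈ ℝ with mixture family M = M(μ_1,…,μ_K) nonempty. Fix w ∈ M and let w_* be the unique element of M ∩ 𝔈. Then w_* is the unique minimizer over v ∈ 𝔈 of the divergence rate D(w|v) = Σ_{(x,y)∈E} p_w^{(2)}(x,y) log(w(y|x)/v(y|x)): for every v ∈ 𝔈 with v ≠ w_*, D(w|w_*) < D(w|v). -/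
open scoped Classical
open Finset

/-- A (row-stochastic) Markov kernel on a finite set `X`: `w x y` means `w(y|x)`. -/
def IsMarkovKernel {X : Type*} [Fintype X] (w : X → X → ℝ) : Prop :=
  (∀ x y : X, 0 ≤ w x y) ∧ ∀ x : X, ∑ y : X, w x y = 1

/-- The directed graph `(X, E)` is strongly connected: from any `x` there is a
finite directed path along edges of `E` to any `y`. -/
def StronglyConnected {X : Type*} (E : Set (X × X)) : Prop :=
  ∀ x y : X, Relation.ReflTransGen (fun a b => (a, b) ∈ E) x y

/-- Membership in `W(X,E)`: a Markov kernel whose support is exactly `E`. -/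
def MemW {X : Type*} [Fintype X] (E : Set (X × X)) (w : X → X → ℝ) : Prop :=
  IsMarkovKernel w ∧ ∀ x y : X, 0 < w x y ↔ (x, y) ∈ E

/-- `p` is a stationary probability distribution of the kernel `w`. -/
def IsStationaryDist {X : Type*} [Fintype X] (w : X → X → ℝ) (p : X → ℝ) : Prop :=
  (∀ x : X, 0 ≤ p x) ∧ (∑ x : X, p x = 1) ∧ ∀ y : X, ∑ x : X, p x * w x y = p y

/-- The stationary distribution `p_w` of `w` (unique for `w ∈ W(X,E)` with
`(X,E)` strongly connected), obtained by choice from existence. -/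
noncomputable def statDist {X : Type*} [Fintype X] (w : X → X → ℝ) : X → ℝ :=
  if h : ∃ p : X → ℝ, IsStationaryDist w p then h.choose else fun _ => 0

/-- The divergence rate `D(v|w) = Σ_{(x,y)∈E} p_v(x) v(y|x) log (v(y|x)/w(y|x))`. -/
noncomputable def divRate {X : Type*} [Fintype X] (E : Set (X × X))
    (v w : X → X → ℝ) : ℝ :=
  ∑ x : X, ∑ y : X,
    if (x, y) ∈ E then statDist v x * v x y * Real.log (v x y / w x y) else 0

/-- `F_1, …, F_K` are linearly independent modulo
`N = {(x,y) ↦ κ(y) − κ(x) − c}` (as functions on `E`). -/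
def LinIndepModN {X : Type*} (E : Set (X × X)) {K : ℕ} (F : Fin K → X → X → ℝ) : Prop :=
  ∀ a : Fin K → ℝ,
    (∃ (κ : X → ℝ) (c : ℝ), ∀ x y : X, (x, y) ∈ E →
      ∑ k : Fin K, a k * F k x y = κ y - κ x - c) →
    a = 0

/-- Membership in the exponential family generated by `C, F_1, …, F_K`. -/
def MemExpFam {X : Type*} [Fintype X] (E : Set (X × X)) {K : ℕ}
    (C : X → X → ℝ) (F : Fin K → X → X → ℝ) (w : X → X → ℝ) : Prop :=
  MemW E w ∧ ∃ (θ : Fin K → ℝ) (κ : X → ℝ) (ψ : ℝ), ∀ x y : X, (x, y) ∈ E →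
    w x y = Real.exp (C x y + ∑ k : Fin K, θ k * F k x y + κ y - κ x - ψ)

/-- Membership in the mixture family `M(μ_1,…,μ_K)`:
`Σ_{(x,y)∈E} p_w(x) w(y|x) F_k(x,y) = μ_k` for all `k`. -/
def MemMix {X : Type*} [Fintype X] (E : Set (X × X)) {K : ℕ}
    (F : Fin K → X → X → ℝ) (μ : Fin K → ℝ) (w : X → X → ℝ) : Prop :=
  MemW E w ∧ ∀ k : Fin K,
    (∑ x : X, ∑ y : X, if (x, y) ∈ E then statDist w x * w x y * F k x y else 0) = μ k


lemma exists_stationary {X : Type*} [Fintype X] [Nonempty X] (w : X → X → ℝ)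
    (hw : IsMarkovKernel w) : ∃ p : X → ℝ, IsStationaryDist w p := by
  set P : Matrix X X ℝ := Matrix.of w with hP
  have hones : (1 - P).mulVec (fun _ => 1) = 0 := by
    funext x
    rw [Pi.zero_apply, Matrix.sub_mulVec, Matrix.one_mulVec, Pi.sub_apply]
    simp [Matrix.mulVec, dotProduct, hP, hw.2 x]
  have hdet : (1 - P).det = 0 := by
    rw [← Matrix.exists_mulVec_eq_zero_iff]
    exact ⟨fun _ => 1, by simp [funext_iff], hones⟩
  have hdetT : (1 - P.transpose).det = 0 := by
    rw [show (1 - P.transpose) = (1 - P).transpose by simp, Matrix.det_transpose]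
    exact hdet
  obtain ⟨v, hv0, hv⟩ := Matrix.exists_mulVec_eq_zero_iff.mpr hdetT
  have hvfix : ∀ y : X, ∑ x : X, v x * w x y = v y := by
    intro y
    have h := congrFun hv y
    rw [Pi.zero_apply, Matrix.sub_mulVec, Matrix.one_mulVec, Pi.sub_apply,
      sub_eq_zero] at h
    rw [h]
    simp only [Matrix.mulVec, dotProduct, Matrix.transpose_apply, hP,
      Matrix.of_apply]
    exact Finset.sum_congr rfl fun x _ => mul_comm _ _
  set q : X → ℝ := fun x => |v x| with hq
  have hqge : ∀ y : X, q y ≤ ∑ x : X, q x * w x y := by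
    intro y
    calc q y = |∑ x : X, v x * w x y| := by rw [hvfix]
    _ ≤ ∑ x : X, |v x * w x y| := Finset.abs_sum_le_sum_abs _ _
    _ = ∑ x : X, q x * w x y := by
        refine Finset.sum_congr rfl fun x _ => ?_
        rw [abs_mul, abs_of_nonneg (hw.1 x y)]
  have hsum : ∑ y : X, ∑ x : X, q x * w x y = ∑ x : X, q x := by
    rw [Finset.sum_comm]
    refine Finset.sum_congr rfl fun x _ => ?_
    rw [← Finset.mul_sum, hw.2 x, mul_one]
  have hqfix : ∀ y : X, ∑ x : X, q x * w x y = q y := by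
    have h0 : ∑ y : X, ((∑ x : X, q x * w x y) - q y) = 0 := by
      rw [Finset.sum_sub_distrib, hsum, sub_self]
    intro y
    have := (Finset.sum_eq_zero_iff_of_nonneg
      (fun z _ => sub_nonneg.mpr (hqge z))).mp h0 y (Finset.mem_univ y)
    linarith [this]
  have hspos : 0 < ∑ x : X, q x := by
    have : ∃ x, v x ≠ 0 := by
      by_contra h
      push_neg at h
      exact hv0 (funext h)
    obtain ⟨x, hx⟩ := this
    exact Finset.sum_pos' (fun z _ => abs_nonneg _)
      ⟨x, Finset.mem_univ x, abs_pos.mpr hx⟩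
  set s := ∑ x : X, q x
  refine ⟨fun x => q x / s, fun x => div_nonneg (abs_nonneg _) hspos.le, ?_, ?_⟩
  · rw [← Finset.sum_div, div_self hspos.ne']
  · intro y
    show ∑ x : X, q x / s * w x y = q y / s
    rw [← hqfix y, Finset.sum_div]
    exact Finset.sum_congr rfl fun x _ => by ring

lemma statDist_spec {X : Type*} [Fintype X] [Nonempty X] (w : X → X → ℝ)
    (hw : IsMarkovKernel w) : IsStationaryDist w (statDist w) := by
  rw [statDist, dif_pos (exists_stationary w hw)]
  exact (exists_stationary w hw).choose_spec

lemma off_E_zero {X : Type*} [Fintype X] {E : Set (X × X)} {w : X → X → ℝ}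
    (hw : MemW E w) {x y : X} (h : (x, y) ∉ E) : w x y = 0 := by
  by_contra h0
  exact h ((hw.2 x y).mp (lt_of_le_of_ne (hw.1.1 x y) (Ne.symm h0)))

lemma statDist_pos {X : Type*} [Fintype X] [Nonempty X] {E : Set (X × X)}
    (hE : StronglyConnected E) {w : X → X → ℝ} (hw : MemW E w) (x : X) :
    0 < statDist w x := by
  obtain ⟨hp0, hp1, hpfix⟩ := statDist_spec w hw.1
  set p := statDist w
  have hx0 : ∃ x₀ : X, 0 < p x₀ := by
    by_contra h
    push_neg at h
    have : ∑ x : X, p x = 0 :=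
      le_antisymm (Finset.sum_nonpos fun z _ => h z) (by rw [hp1]; norm_num) |>.trans rfl
    rw [hp1] at this; norm_num at this
  obtain ⟨x₀, hx₀⟩ := hx0
  have key : ∀ a b : X, Relation.ReflTransGen (fun a b => (a, b) ∈ E) a b →
      0 < p a → 0 < p b := by
    intro a b hab hpa
    induction hab with
    | refl => exact hpa
    | tail _ hbc ih =>
      rename_i b' c' _
      have hpos := ih
      rw [← hpfix c']
      have hterm : 0 < p b' * w b' c' := mul_pos hpos ((hw.2 b' c').mpr hbc)
      calc (0:ℝ) < p b' * w b' c' := hterm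
      _ ≤ ∑ z : X, p z * w z c' :=
          Finset.single_le_sum (fun z _ => mul_nonneg (hp0 z) (hw.1.1 z c'))
            (Finset.mem_univ b')
  exact key x₀ x (hE x₀ x) hx₀

lemma affine_sum {X : Type*} [Fintype X] [Nonempty X] (E : Set (X × X)) {K : ℕ}
    (F : Fin K → X → X → ℝ) (μ : Fin K → ℝ) (u : X → X → ℝ)
    (hu : MemMix E F μ u) (c : Fin K → ℝ) (κ : X → ℝ) (d : ℝ) (g : X → X → ℝ)
    (hg : ∀ x y : X, (x, y) ∈ E →
      g x y = (∑ k : Fin K, c k * F k x y) + κ y - κ x - d) :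
    (∑ x : X, ∑ y : X, if (x, y) ∈ E then statDist u x * u x y * g x y else 0)
      = (∑ k : Fin K, c k * μ k) - d := by
  obtain ⟨hp0, hp1, hpfix⟩ := statDist_spec u hu.1.1
  set p := statDist u with hpdef
  have hC : ∀ k : Fin K, ∑ x : X, ∑ y : X, p x * u x y * F k x y = μ k := by
    intro k
    rw [← hu.2 k]
    refine Finset.sum_congr rfl fun x _ => Finset.sum_congr rfl fun y _ => ?_
    by_cases h : (x, y) ∈ E
    · rw [if_pos h]
    · rw [if_neg h, off_E_zero hu.1 h]; ring
  have step1 : (∑ x : X, ∑ y : X,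
      if (x, y) ∈ E then p x * u x y * g x y else 0)
      = ∑ x : X, ∑ y : X,
        p x * u x y * ((∑ k : Fin K, c k * F k x y) + κ y - κ x - d) := by
    refine Finset.sum_congr rfl fun x _ => Finset.sum_congr rfl fun y _ => ?_
    by_cases h : (x, y) ∈ E
    · rw [if_pos h, hg x y h]
    · rw [if_neg h, off_E_zero hu.1 h]; ring
  have expand : ∀ x y : X,
      p x * u x y * ((∑ k : Fin K, c k * F k x y) + κ y - κ x - d)
      = (∑ k : Fin K, c k * (p x * u x y * F k x y)) + p x * u x y * κ y
        - p x * u x y * κ x - p x * u x y * d := by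
    intro x y
    have h1 : p x * u x y * (∑ k : Fin K, c k * F k x y)
        = ∑ k : Fin K, c k * (p x * u x y * F k x y) := by
      rw [Finset.mul_sum]
      exact Finset.sum_congr rfl fun k _ => by ring
    rw [← h1]; ring
  have hswap : ∑ x : X, ∑ y : X, ∑ k : Fin K, c k * (p x * u x y * F k x y)
      = ∑ k : Fin K, c k * μ k := by
    calc ∑ x : X, ∑ y : X, ∑ k : Fin K, c k * (p x * u x y * F k x y)
        = ∑ x : X, ∑ k : Fin K, c k * ∑ y : X, p x * u x y * F k x y := by
          refine Finset.sum_congr rfl fun x _ => ?_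
          rw [Finset.sum_comm]
          exact Finset.sum_congr rfl fun k _ => (Finset.mul_sum _ _ _).symm
      _ = ∑ k : Fin K, c k * ∑ x : X, ∑ y : X, p x * u x y * F k x y := by
          rw [Finset.sum_comm]
          exact Finset.sum_congr rfl fun k _ => (Finset.mul_sum _ _ _).symm
      _ = ∑ k : Fin K, c k * μ k := by
          exact Finset.sum_congr rfl fun k _ => by rw [hC k]
  have hA : ∑ x : X, ∑ y : X, p x * u x y * κ y = ∑ y : X, p y * κ y := by
    rw [Finset.sum_comm]
    refine Finset.sum_congr rfl fun y _ => ?_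
    rw [← hpfix y, Finset.sum_mul]
  have hB : ∑ x : X, ∑ y : X, p x * u x y * κ x = ∑ x : X, p x * κ x := by
    refine Finset.sum_congr rfl fun x _ => ?_
    have : ∑ y : X, p x * u x y * κ x = p x * κ x * ∑ y : X, u x y := by
      rw [Finset.mul_sum]
      exact Finset.sum_congr rfl fun y _ => by ring
    rw [this, hu.1.1.2 x, mul_one]
  have hD : ∑ x : X, ∑ y : X, p x * u x y * d = d := by
    have : ∑ x : X, ∑ y : X, p x * u x y * d = ∑ x : X, p x * d := by
      refine Finset.sum_congr rfl fun x _ => ?_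
      have : ∑ y : X, p x * u x y * d = p x * d * ∑ y : X, u x y := by
        rw [Finset.mul_sum]
        exact Finset.sum_congr rfl fun y _ => by ring
      rw [this, hu.1.1.2 x, mul_one]
    rw [this, ← Finset.sum_mul, hp1, one_mul]
  calc (∑ x : X, ∑ y : X, if (x, y) ∈ E then p x * u x y * g x y else 0)
      = ∑ x : X, ∑ y : X,
        ((∑ k : Fin K, c k * (p x * u x y * F k x y)) + p x * u x y * κ y
          - p x * u x y * κ x - p x * u x y * d) := by
        rw [step1]
        exact Finset.sum_congr rfl fun x _ => Finset.sum_congr rfl fun y _ =>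
          expand x y
    _ = (∑ x : X, ∑ y : X, ∑ k : Fin K, c k * (p x * u x y * F k x y))
        + (∑ x : X, ∑ y : X, p x * u x y * κ y)
        - (∑ x : X, ∑ y : X, p x * u x y * κ x)
        - (∑ x : X, ∑ y : X, p x * u x y * d) := by
        simp only [Finset.sum_add_distrib, Finset.sum_sub_distrib]
    _ = (∑ k : Fin K, c k * μ k) - d := by
        rw [hswap, hA, hB, hD]; ring

lemma gibbs_strict {X : Type*} [Fintype X] [Nonempty X] {E : Set (X × X)}
    (hE : StronglyConnected E) {a b : X → X → ℝ}
    (ha : MemW E a) (hb : MemW E b) (hne : b ≠ a) :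
    0 < divRate E a b := by
  obtain ⟨hp0, hp1, hpfix⟩ := statDist_spec a ha.1
  set p := statDist a with hpdef
  have hppos : ∀ x : X, 0 < p x := statDist_pos hE ha
  -- the comparison terms
  set t : X → X → ℝ := fun x y =>
    if (x, y) ∈ E then p x * a x y * Real.log (a x y / b x y) else 0 with ht
  set s : X → X → ℝ := fun x y => p x * (a x y - b x y) with hs
  have hsum_s : ∑ x : X, ∑ y : X, s x y = 0 := by
    refine Finset.sum_eq_zero fun x _ => ?_
    have : ∑ y : X, s x y = p x * ((∑ y : X, a x y) - ∑ y : X, b x y) := by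
      simp only [hs]
      rw [← Finset.mul_sum, Finset.sum_sub_distrib]
    rw [this, ha.1.2 x, hb.1.2 x, sub_self, mul_zero]
  have hle : ∀ x y : X, s x y ≤ t x y := by
    intro x y
    by_cases h : (x, y) ∈ E
    · have hax : 0 < a x y := (ha.2 x y).mpr h
      have hbx : 0 < b x y := (hb.2 x y).mpr h
      have hlog : Real.log (b x y / a x y) ≤ b x y / a x y - 1 :=
        Real.log_le_sub_one_of_pos (div_pos hbx hax)
      have hlog2 : 1 - b x y / a x y ≤ Real.log (a x y / b x y) := by
        rw [Real.log_div hax.ne' hbx.ne']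
        rw [Real.log_div hbx.ne' hax.ne'] at hlog
        linarith
      have : a x y - b x y ≤ a x y * Real.log (a x y / b x y) := by
        have := mul_le_mul_of_nonneg_left hlog2 hax.le
        rw [mul_sub, mul_one, mul_div_cancel₀ _ hax.ne'] at this
        linarith
      simp only [ht, hs, if_pos h]
      calc p x * (a x y - b x y) ≤ p x * (a x y * Real.log (a x y / b x y)) :=
            mul_le_mul_of_nonneg_left this (hppos x).le
        _ = p x * a x y * Real.log (a x y / b x y) := by ring
    · simp only [ht, hs, if_neg h, off_E_zero ha h, off_E_zero hb h]
      norm_num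
  have hex : ∃ x₀ y₀ : X, s x₀ y₀ < t x₀ y₀ := by
    have : ∃ xy : X × X, b xy.1 xy.2 ≠ a xy.1 xy.2 := by
      by_contra h
      push_neg at h
      exact hne (funext fun x => funext fun y => h (x, y))
    obtain ⟨⟨x₀, y₀⟩, hxy⟩ := this
    have hEm : (x₀, y₀) ∈ E := by
      by_contra h
      exact hxy (by rw [off_E_zero ha h, off_E_zero hb h])
    have hax : 0 < a x₀ y₀ := (ha.2 x₀ y₀).mpr hEm
    have hbx : 0 < b x₀ y₀ := (hb.2 x₀ y₀).mpr hEm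
    refine ⟨x₀, y₀, ?_⟩
    have hne1 : b x₀ y₀ / a x₀ y₀ ≠ 1 := by
      rw [Ne, div_eq_one_iff_eq hax.ne']
      exact hxy
    have hlog : Real.log (b x₀ y₀ / a x₀ y₀) < b x₀ y₀ / a x₀ y₀ - 1 :=
      Real.log_lt_sub_one_of_pos (div_pos hbx hax) hne1
    have hlog2 : 1 - b x₀ y₀ / a x₀ y₀ < Real.log (a x₀ y₀ / b x₀ y₀) := by
      rw [Real.log_div hax.ne' hbx.ne']
      rw [Real.log_div hbx.ne' hax.ne'] at hlog
      linarith
    have hmain : a x₀ y₀ - b x₀ y₀ < a x₀ y₀ * Real.log (a x₀ y₀ / b x₀ y₀) := by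
      have := mul_lt_mul_of_pos_left hlog2 hax
      rw [mul_sub, mul_one, mul_div_cancel₀ _ hax.ne'] at this
      linarith
    simp only [ht, hs, if_pos hEm]
    calc p x₀ * (a x₀ y₀ - b x₀ y₀)
        < p x₀ * (a x₀ y₀ * Real.log (a x₀ y₀ / b x₀ y₀)) :=
          mul_lt_mul_of_pos_left hmain (hppos x₀)
      _ = p x₀ * a x₀ y₀ * Real.log (a x₀ y₀ / b x₀ y₀) := by ring
  obtain ⟨x₀, y₀, hx₀y₀⟩ := hex
  have hlt : ∑ x : X, ∑ y : X, s x y < ∑ x : X, ∑ y : X, t x y := by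
    refine Finset.sum_lt_sum (fun x _ => Finset.sum_le_sum fun y _ => hle x y)
      ⟨x₀, Finset.mem_univ x₀, ?_⟩
    exact Finset.sum_lt_sum (fun y _ => hle x₀ y) ⟨y₀, Finset.mem_univ y₀, hx₀y₀⟩
  rw [divRate]
  calc (0:ℝ) = ∑ x : X, ∑ y : X, s x y := hsum_s.symm
    _ < ∑ x : X, ∑ y : X, t x y := hlt
    _ = _ := rfl

/-- the unique element of the intersection is the unique
minimizer of the divergence rate over the exponential family (m-projection). -/
theorem stmt_14 {X : Type*} [Fintype X] [Nonempty X] (E : Set (X × X))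
    (hE : StronglyConnected E) (K : ℕ)
    (C : X → X → ℝ) (F : Fin K → X → X → ℝ) (hF : LinIndepModN E F)
    (μ : Fin K → ℝ) (w wstar : X → X → ℝ)
    (hw : MemMix E F μ w)
    (hstar : MemMix E F μ wstar ∧ MemExpFam E C F wstar) :
    ∀ v : X → X → ℝ, MemExpFam E C F v → v ≠ wstar →
      divRate E w wstar < divRate E w v := by
  intro v hv hne
  obtain ⟨θs, κs, ψs, hws⟩ := hstar.2.2
  obtain ⟨θv, κv, ψv, hvv⟩ := hv.2
  have hg : ∀ x y : X, (x, y) ∈ E →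
      Real.log (wstar x y) - Real.log (v x y)
        = (∑ k : Fin K, (θs k - θv k) * F k x y) + (κs y - κv y) - (κs x - κv x)
          - (ψs - ψv) := by
    intro x y h
    have h1 : ∑ k : Fin K, (θs k - θv k) * F k x y
        = (∑ k : Fin K, θs k * F k x y) - ∑ k : Fin K, θv k * F k x y := by
      rw [← Finset.sum_sub_distrib]
      exact Finset.sum_congr rfl fun k _ => by ring
    rw [hws x y h, hvv x y h, Real.log_exp, Real.log_exp, h1]
    ring
  have h1 := affine_sum E F μ w hw (fun k => θs k - θv k) (fun x => κs x - κv x)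
    (ψs - ψv) (fun x y => Real.log (wstar x y) - Real.log (v x y)) hg
  have h2 := affine_sum E F μ wstar hstar.1 (fun k => θs k - θv k)
    (fun x => κs x - κv x) (ψs - ψv)
    (fun x y => Real.log (wstar x y) - Real.log (v x y)) hg
  have h3 : divRate E w v - divRate E w wstar
      = ∑ x : X, ∑ y : X, if (x, y) ∈ E then
          statDist w x * w x y * (Real.log (wstar x y) - Real.log (v x y)) else 0 := by
    rw [divRate, divRate, ← Finset.sum_sub_distrib]
    refine Finset.sum_congr rfl fun x _ => ?_
    rw [← Finset.sum_sub_distrib]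
    refine Finset.sum_congr rfl fun y _ => ?_
    by_cases h : (x, y) ∈ E
    · simp only [if_pos h]
      have hw0 : (0:ℝ) < w x y := (hw.1.2 x y).mpr h
      have hv0 : (0:ℝ) < v x y := (hv.1.2 x y).mpr h
      have hs0 : (0:ℝ) < wstar x y := (hstar.1.1.2 x y).mpr h
      rw [Real.log_div hw0.ne' hv0.ne', Real.log_div hw0.ne' hs0.ne']
      ring
    · simp [if_neg h]
  have h5 : divRate E wstar v
      = ∑ x : X, ∑ y : X, if (x, y) ∈ E then
          statDist wstar x * wstar x y
            * (Real.log (wstar x y) - Real.log (v x y)) else 0 := by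
    rw [divRate]
    refine Finset.sum_congr rfl fun x _ => Finset.sum_congr rfl fun y _ => ?_
    by_cases h : (x, y) ∈ E
    · simp only [if_pos h]
      have hv0 : (0:ℝ) < v x y := (hv.1.2 x y).mpr h
      have hs0 : (0:ℝ) < wstar x y := (hstar.1.1.2 x y).mpr h
      rw [Real.log_div hs0.ne' hv0.ne']
    · simp [if_neg h]
  have hpos : 0 < divRate E wstar v := gibbs_strict hE hstar.2.1 hv.1 hne
  have hkey : divRate E w v - divRate E w wstar = divRate E wstar v := by
    rw [h3, h1, h5, h2]
  linarith
end

section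
/- Let X be a finite nonempty set, E ⊆ X × X strongly connected, and fix v_0 ∈ W(X,E). Then the function G(p) = Σ_{(x,y)∈E} p(x,y) log(p(x,y)/v_0(y|x)) − Σ_{x∈X} p̄(x) log p̄(x) is strictly convex on P_s: for any p_0, p_1 ∈ P_s with p_0 ≠ p_1 and any t ∈ (0,1), G((1−t)p_0 + t p_1) < (1−t)G(p_0) + t·G(p_1). -/
open scoped Classical
open Finset

/-- Membership in P_s: probability distributions on X × X with support exactly
E and equal margins. -/
def MemPs {X : Type*} [Fintype X] (E : Set (X × X)) (p : X → X → ℝ) : Prop :=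
  (∀ x y : X, 0 ≤ p x y) ∧ (∑ x : X, ∑ y : X, p x y = 1) ∧
  (∀ x y : X, 0 < p x y ↔ (x, y) ∈ E) ∧
  ∀ x : X, ∑ y : X, p x y = ∑ y : X, p y x

/-- The objective G(p), the divergence rate from p(y|x) to v0(y|x). -/
noncomputable def Gfun {X : Type*} [Fintype X] (E : Set (X × X))
    (v0 : X → X → ℝ) (p : X → X → ℝ) : ℝ :=
  (∑ x : X, ∑ y : X, if (x, y) ∈ E then p x y * Real.log (p x y / v0 x y) else 0)
    - ∑ x : X, (∑ y : X, p x y) * Real.log (∑ y : X, p x y)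



lemma persp_id19 (a b : ℝ) (ha : 0 < a) (hb : 0 < b) :
    b * ((a / b) * Real.log (a / b)) = a * Real.log a - a * Real.log b := by
  rw [Real.log_div ha.ne' hb.ne']
  field_simp

lemma core_lt19 (t a0 a1 b0 b1 : ℝ) (ht0 : 0 < t) (ht1 : t < 1)
    (ha0 : 0 < a0) (ha1 : 0 < a1) (hb0 : 0 < b0) (hb1 : 0 < b1)
    (hne : a0 / b0 ≠ a1 / b1) :
    ((1-t)*a0 + t*a1) * Real.log ((1-t)*a0 + t*a1)
      - ((1-t)*a0 + t*a1) * Real.log ((1-t)*b0 + t*b1)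
      < (1-t) * (a0 * Real.log a0 - a0 * Real.log b0)
        + t * (a1 * Real.log a1 - a1 * Real.log b1) := by
  set a := (1-t)*a0 + t*a1 with hadef
  set b := (1-t)*b0 + t*b1 with hbdef
  have h1t : 0 < 1 - t := by linarith
  have hb : 0 < b := by positivity
  have ha : 0 < a := by positivity
  have hlam0 : 0 < (1-t)*b0/b := by positivity
  have hlam1 : 0 < t*b1/b := by positivity
  have hlamsum : (1-t)*b0/b + t*b1/b = 1 := by field_simp; exact hbdef.symm
  have hmix : ((1-t)*b0/b) • (a0/b0) + ((t*b1/b)) • (a1/b1) = a / b := by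
    simp only [smul_eq_mul]
    field_simp
    ring
  have hconv := Real.strictConvexOn_mul_log.2 (Set.mem_Ici.mpr (le_of_lt (by positivity : (0:ℝ) < a0/b0)))
    (Set.mem_Ici.mpr (le_of_lt (by positivity : (0:ℝ) < a1/b1))) hne hlam0 hlam1 hlamsum
  rw [hmix] at hconv
  calc a * Real.log a - a * Real.log b = b * ((a/b) * Real.log (a/b)) := (persp_id19 a b ha hb).symm
    _ < b * ((1-t)*b0/b * (a0/b0 * Real.log (a0/b0)) + t*b1/b * (a1/b1 * Real.log (a1/b1))) := by
        exact mul_lt_mul_of_pos_left hconv hb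
    _ = (1-t) * (b0 * ((a0/b0) * Real.log (a0/b0))) + t * (b1 * ((a1/b1) * Real.log (a1/b1))) := by
        field_simp
    _ = (1-t) * (a0 * Real.log a0 - a0 * Real.log b0)
        + t * (a1 * Real.log a1 - a1 * Real.log b1) := by
        rw [persp_id19 a0 b0 ha0 hb0, persp_id19 a1 b1 ha1 hb1]

lemma core_le19 (t a0 a1 b0 b1 : ℝ) (ht0 : 0 < t) (ht1 : t < 1)
    (ha0 : 0 < a0) (ha1 : 0 < a1) (hb0 : 0 < b0) (hb1 : 0 < b1) :
    ((1-t)*a0 + t*a1) * Real.log ((1-t)*a0 + t*a1)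
      - ((1-t)*a0 + t*a1) * Real.log ((1-t)*b0 + t*b1)
      ≤ (1-t) * (a0 * Real.log a0 - a0 * Real.log b0)
        + t * (a1 * Real.log a1 - a1 * Real.log b1) := by
  by_cases hne : a0 / b0 = a1 / b1
  · set a := (1-t)*a0 + t*a1 with hadef
    set b := (1-t)*b0 + t*b1 with hbdef
    have h1t : 0 < 1 - t := by linarith
    have hb : 0 < b := by positivity
    have ha : 0 < a := by positivity
    have hconv := Real.convexOn_mul_log.2 (Set.mem_Ici.mpr (le_of_lt (by positivity : (0:ℝ) < a0/b0)))
      (Set.mem_Ici.mpr (le_of_lt (by positivity : (0:ℝ) < a1/b1)))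
      (le_of_lt (by positivity : (0:ℝ) < (1-t)*b0/b)) (le_of_lt (by positivity : (0:ℝ) < t*b1/b))
      (by field_simp; exact hbdef.symm : (1-t)*b0/b + t*b1/b = 1)
    have hmix : ((1-t)*b0/b) • (a0/b0) + ((t*b1/b)) • (a1/b1) = a / b := by
      simp only [smul_eq_mul]; field_simp; ring
    rw [hmix] at hconv
    calc a * Real.log a - a * Real.log b = b * ((a/b) * Real.log (a/b)) := (persp_id19 a b ha hb).symm
      _ ≤ b * ((1-t)*b0/b * (a0/b0 * Real.log (a0/b0)) + t*b1/b * (a1/b1 * Real.log (a1/b1))) := by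
          exact mul_le_mul_of_nonneg_left hconv hb.le
      _ = (1-t) * (b0 * ((a0/b0) * Real.log (a0/b0))) + t * (b1 * ((a1/b1) * Real.log (a1/b1))) := by
          field_simp
      _ = (1-t) * (a0 * Real.log a0 - a0 * Real.log b0)
          + t * (a1 * Real.log a1 - a1 * Real.log b1) := by
          rw [persp_id19 a0 b0 ha0 hb0, persp_id19 a1 b1 ha1 hb1]
  · exact (core_lt19 t a0 a1 b0 b1 ht0 ht1 ha0 ha1 hb0 hb1 hne).le

lemma edge_le19 (t a0 a1 b0 b1 v : ℝ) (ht0 : 0 < t) (ht1 : t < 1)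
    (ha0 : 0 < a0) (ha1 : 0 < a1) (hb0 : 0 < b0) (hb1 : 0 < b1) (hv : 0 < v) :
    ((1-t)*a0 + t*a1) * Real.log (((1-t)*a0 + t*a1)/v)
      - ((1-t)*a0 + t*a1) * Real.log ((1-t)*b0 + t*b1)
      ≤ (1-t) * (a0 * Real.log (a0/v) - a0 * Real.log b0)
        + t * (a1 * Real.log (a1/v) - a1 * Real.log b1) := by
  have h1t : 0 < 1 - t := by linarith
  have ha : 0 < (1-t)*a0 + t*a1 := by positivity
  have h := core_le19 t a0 a1 b0 b1 ht0 ht1 ha0 ha1 hb0 hb1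
  have e1 : ((1-t)*a0 + t*a1) * Real.log (((1-t)*a0 + t*a1)/v)
      - ((1-t)*a0 + t*a1) * Real.log ((1-t)*b0 + t*b1)
      = (((1-t)*a0 + t*a1) * Real.log ((1-t)*a0 + t*a1)
        - ((1-t)*a0 + t*a1) * Real.log ((1-t)*b0 + t*b1))
        - ((1-t)*a0 + t*a1) * Real.log v := by
    rw [Real.log_div ha.ne' hv.ne']; ring
  have e2 : (1-t) * (a0 * Real.log (a0/v) - a0 * Real.log b0)
        + t * (a1 * Real.log (a1/v) - a1 * Real.log b1)
      = ((1-t) * (a0 * Real.log a0 - a0 * Real.log b0)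
        + t * (a1 * Real.log a1 - a1 * Real.log b1))
        - ((1-t)*a0 + t*a1) * Real.log v := by
    rw [Real.log_div ha0.ne' hv.ne', Real.log_div ha1.ne' hv.ne']; ring
  rw [e1, e2]
  linarith

lemma edge_lt19 (t a0 a1 b0 b1 v : ℝ) (ht0 : 0 < t) (ht1 : t < 1)
    (ha0 : 0 < a0) (ha1 : 0 < a1) (hb0 : 0 < b0) (hb1 : 0 < b1) (hv : 0 < v)
    (hne : a0 * b1 ≠ a1 * b0) :
    ((1-t)*a0 + t*a1) * Real.log (((1-t)*a0 + t*a1)/v)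
      - ((1-t)*a0 + t*a1) * Real.log ((1-t)*b0 + t*b1)
      < (1-t) * (a0 * Real.log (a0/v) - a0 * Real.log b0)
        + t * (a1 * Real.log (a1/v) - a1 * Real.log b1) := by
  have h1t : 0 < 1 - t := by linarith
  have ha : 0 < (1-t)*a0 + t*a1 := by positivity
  have hne' : a0 / b0 ≠ a1 / b1 := by
    rw [ne_eq, div_eq_div_iff hb0.ne' hb1.ne']
    exact hne
  have h := core_lt19 t a0 a1 b0 b1 ht0 ht1 ha0 ha1 hb0 hb1 hne'
  have e1 : ((1-t)*a0 + t*a1) * Real.log (((1-t)*a0 + t*a1)/v)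
      - ((1-t)*a0 + t*a1) * Real.log ((1-t)*b0 + t*b1)
      = (((1-t)*a0 + t*a1) * Real.log ((1-t)*a0 + t*a1)
        - ((1-t)*a0 + t*a1) * Real.log ((1-t)*b0 + t*b1))
        - ((1-t)*a0 + t*a1) * Real.log v := by
    rw [Real.log_div ha.ne' hv.ne']; ring
  have e2 : (1-t) * (a0 * Real.log (a0/v) - a0 * Real.log b0)
        + t * (a1 * Real.log (a1/v) - a1 * Real.log b1)
      = ((1-t) * (a0 * Real.log a0 - a0 * Real.log b0)
        + t * (a1 * Real.log a1 - a1 * Real.log b1))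
        - ((1-t)*a0 + t*a1) * Real.log v := by
    rw [Real.log_div ha0.ne' hv.ne', Real.log_div ha1.ne' hv.ne']; ring
  rw [e1, e2]
  linarith

lemma memPs_zero_off19 {X : Type*} [Fintype X] {E : Set (X × X)} {p : X → X → ℝ}
    (hp : MemPs E p) {x y : X} (h : (x, y) ∉ E) : p x y = 0 := by
  by_contra hc
  exact h ((hp.2.2.1 x y).1 (lt_of_le_of_ne (hp.1 x y) (Ne.symm hc)))

lemma Gfun_eq19 {X : Type*} [Fintype X] (E : Set (X × X)) (v0 p : X → X → ℝ)
    (hz : ∀ x y, (x, y) ∉ E → p x y = 0) :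
    Gfun E v0 p = ∑ x : X, ∑ y : X,
      if (x, y) ∈ E then p x y * Real.log (p x y / v0 x y)
        - p x y * Real.log (∑ z : X, p x z) else 0 := by
  unfold Gfun
  rw [← Finset.sum_sub_distrib]
  refine Finset.sum_congr rfl fun x _ => ?_
  have hsplit : ∀ y : X, (if (x, y) ∈ E then p x y * Real.log (p x y / v0 x y)
      - p x y * Real.log (∑ z : X, p x z) else 0)
      = (if (x, y) ∈ E then p x y * Real.log (p x y / v0 x y) else 0)
        - p x y * Real.log (∑ z : X, p x z) := by
    intro y
    by_cases h : (x, y) ∈ E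
    · simp [h]
    · simp [h, hz x y h]
  simp only [hsplit]
  rw [Finset.sum_sub_distrib, ← Finset.sum_mul]

lemma row_pos19 {X : Type*} [Fintype X] (E : Set (X × X)) (hE : StronglyConnected E)
    (p : X → X → ℝ) (hp : MemPs E p) (x : X) : 0 < ∑ y : X, p x y := by
  obtain ⟨a, b, hab⟩ : ∃ a b, 0 < p a b := by
    by_contra h
    push_neg at h
    have : ∑ x : X, ∑ y : X, p x y = 0 :=
      Finset.sum_eq_zero fun i _ => Finset.sum_eq_zero fun j _ => le_antisymm (h i j) (hp.1 i j)
    rw [hp.2.1] at this; norm_num at this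
  have habE : (a, b) ∈ E := (hp.2.2.1 a b).1 hab
  obtain ⟨y, hy⟩ : ∃ y, (x, y) ∈ E := by
    rcases (hE x a).cases_head with h | ⟨c, hc, _⟩
    · exact ⟨b, h ▸ habE⟩
    · exact ⟨c, hc⟩
  exact Finset.sum_pos' (fun i _ => hp.1 x i) ⟨y, Finset.mem_univ y, (hp.2.2.1 x y).2 hy⟩

lemma rigidity19 {X : Type*} [Fintype X] [Nonempty X] (E : Set (X × X))
    (hE : StronglyConnected E) (p0 p1 : X → X → ℝ) (hp0 : MemPs E p0) (hp1 : MemPs E p1)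
    (H : ∀ x y : X, (x, y) ∈ E →
      p0 x y * (∑ z : X, p1 x z) = p1 x y * (∑ z : X, p0 x z)) :
    p0 = p1 := by
  set s0 : X → ℝ := fun x => ∑ z : X, p0 x z with hs0
  set s1 : X → ℝ := fun x => ∑ z : X, p1 x z with hs1
  have hs0p : ∀ x, 0 < s0 x := row_pos19 E hE p0 hp0
  have hs1p : ∀ x, 0 < s1 x := row_pos19 E hE p1 hp1
  set r : X → ℝ := fun x => s1 x / s0 x with hr
  have key : ∀ x y, p1 x y = r x * p0 x y := by
    intro x y
    by_cases h : (x, y) ∈ E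
    · have hH := H x y h
      have : r x * p0 x y = (p0 x y * s1 x) / s0 x := by
        simp only [hr]; field_simp
      rw [this, hH, mul_div_assoc, div_self (hs0p x).ne', mul_one]
    · rw [memPs_zero_off19 hp0 h, memPs_zero_off19 hp1 h, mul_zero]
  have hrs : ∀ x, r x * s0 x = s1 x := fun x => div_mul_cancel₀ (s1 x) (hs0p x).ne'
  have marg : ∀ x, ∑ y : X, (r x - r y) * p0 y x = 0 := by
    intro x
    have h1 : ∑ y : X, r y * p0 y x = s1 x := by
      have : ∀ y, r y * p0 y x = p1 y x := fun y => (key y x).symm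
      simp only [this]
      exact (hp1.2.2.2 x).symm
    have h2 : ∑ y : X, p0 y x = s0 x := (hp0.2.2.2 x).symm
    have : ∑ y : X, (r x - r y) * p0 y x
        = r x * (∑ y : X, p0 y x) - ∑ y : X, r y * p0 y x := by
      rw [Finset.mul_sum, ← Finset.sum_sub_distrib]
      exact Finset.sum_congr rfl fun y _ => by ring
    rw [this, h1, h2, hrs x, sub_self]
  obtain ⟨xm, _, hmax⟩ := Finset.exists_max_image (Finset.univ : Finset X) r
    ⟨Classical.arbitrary X, Finset.mem_univ _⟩
  have hstep : ∀ x, r x = r xm → ∀ y, (y, x) ∈ E → r y = r xm := by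
    intro x hx y hyx
    have hnn : ∀ i ∈ (Finset.univ : Finset X), 0 ≤ (r x - r i) * p0 i x := fun i _ =>
      mul_nonneg (sub_nonneg.mpr (hx ▸ hmax i (Finset.mem_univ i))) (hp0.1 i x)
    have hzero := (Finset.sum_eq_zero_iff_of_nonneg hnn).mp (marg x) y (Finset.mem_univ y)
    have hppos : 0 < p0 y x := (hp0.2.2.1 y x).2 hyx
    rcases mul_eq_zero.mp hzero with h | h
    · linarith [sub_eq_zero.mp h, hx]
    · exact absurd h hppos.ne'
  have hall : ∀ y, r y = r xm := by
    intro y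
    refine Relation.ReflTransGen.head_induction_on (hE y xm) rfl ?_
    intro a c hac _ ih
    exact hstep c ih a hac
  have hM : r xm = 1 := by
    have h1 : ∑ x : X, s1 x = 1 := hp1.2.1
    have h0 : ∑ x : X, s0 x = 1 := hp0.2.1
    have : ∑ x : X, s1 x = r xm * ∑ x : X, s0 x := by
      rw [Finset.mul_sum]
      refine Finset.sum_congr rfl fun x _ => ?_
      rw [← hall x, hrs x]
    rw [h1, h0, mul_one] at this
    exact this.symm
  funext x y
  have := key x y
  rw [hall x, hM, one_mul] at this
  exact this.symm


/-- G is strictly convex on P_s. -/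
theorem stmt_19 {X : Type*} [Fintype X] [Nonempty X] (E : Set (X × X))
    (hE : StronglyConnected E) (v0 : X → X → ℝ) (hv0 : MemW E v0)
    (p0 p1 : X → X → ℝ) (hp0 : MemPs E p0) (hp1 : MemPs E p1)
    (hne : p0 ≠ p1) (t : ℝ) (ht : t ∈ Set.Ioo (0 : ℝ) 1) :
    Gfun E v0 (fun x y => (1 - t) * p0 x y + t * p1 x y) <
      (1 - t) * Gfun E v0 p0 + t * Gfun E v0 p1 := by
  obtain ⟨ht0, ht1⟩ := ht
  have h1t : 0 < 1 - t := by linarith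
  have hz0 : ∀ x y, (x, y) ∉ E → p0 x y = 0 := fun x y h => memPs_zero_off19 hp0 h
  have hz1 : ∀ x y, (x, y) ∉ E → p1 x y = 0 := fun x y h => memPs_zero_off19 hp1 h
  have hzq : ∀ x y, (x, y) ∉ E → (fun x y => (1 - t) * p0 x y + t * p1 x y) x y = 0 := by
    intro x y h; simp only []; rw [hz0 x y h, hz1 x y h]; ring
  have hs0 := row_pos19 E hE p0 hp0
  have hs1 := row_pos19 E hE p1 hp1
  have hsq : ∀ x : X, (∑ z : X, ((1 - t) * p0 x z + t * p1 x z))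
      = (1 - t) * (∑ z : X, p0 x z) + t * (∑ z : X, p1 x z) := by
    intro x; rw [Finset.sum_add_distrib, Finset.mul_sum, Finset.mul_sum]
  rw [Gfun_eq19 E v0 _ hzq, Gfun_eq19 E v0 p0 hz0, Gfun_eq19 E v0 p1 hz1]
  have hrhs : (1 - t) * (∑ x : X, ∑ y : X, if (x,y) ∈ E then p0 x y * Real.log (p0 x y / v0 x y) - p0 x y * Real.log (∑ z : X, p0 x z) else 0)
      + t * (∑ x : X, ∑ y : X, if (x,y) ∈ E then p1 x y * Real.log (p1 x y / v0 x y) - p1 x y * Real.log (∑ z : X, p1 x z) else 0)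
      = ∑ x : X, ∑ y : X,
        ((1 - t) * (if (x,y) ∈ E then p0 x y * Real.log (p0 x y / v0 x y) - p0 x y * Real.log (∑ z : X, p0 x z) else 0)
         + t * (if (x,y) ∈ E then p1 x y * Real.log (p1 x y / v0 x y) - p1 x y * Real.log (∑ z : X, p1 x z) else 0)) := by
    rw [Finset.mul_sum, Finset.mul_sum, ← Finset.sum_add_distrib]
    exact Finset.sum_congr rfl fun x _ => by
      rw [Finset.mul_sum, Finset.mul_sum, ← Finset.sum_add_distrib]
  rw [hrhs]
  have hterm : ∀ x y : X,
      (if (x,y) ∈ E then ((1 - t) * p0 x y + t * p1 x y) * Real.log (((1 - t) * p0 x y + t * p1 x y) / v0 x y)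
        - ((1 - t) * p0 x y + t * p1 x y) * Real.log (∑ z : X, ((1 - t) * p0 x z + t * p1 x z)) else 0)
      ≤ (1 - t) * (if (x,y) ∈ E then p0 x y * Real.log (p0 x y / v0 x y) - p0 x y * Real.log (∑ z : X, p0 x z) else 0)
         + t * (if (x,y) ∈ E then p1 x y * Real.log (p1 x y / v0 x y) - p1 x y * Real.log (∑ z : X, p1 x z) else 0) := by
    intro x y
    by_cases h : (x, y) ∈ E
    · simp only [if_pos h]
      rw [hsq x]
      exact edge_le19 t (p0 x y) (p1 x y) (∑ z : X, p0 x z) (∑ z : X, p1 x z) (v0 x y) ht0 ht1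
        ((hp0.2.2.1 x y).2 h) ((hp1.2.2.1 x y).2 h) (hs0 x) (hs1 x) ((hv0.2 x y).2 h)
    · simp [h]
  by_cases hcase : ∀ x y : X, (x, y) ∈ E →
      p0 x y * (∑ z : X, p1 x z) = p1 x y * (∑ z : X, p0 x z)
  · exact absurd (rigidity19 E hE p0 p1 hp0 hp1 hcase) hne
  · push_neg at hcase
    obtain ⟨x0, y0, hx0E, hx0ne⟩ := hcase
    refine Finset.sum_lt_sum (fun x _ => Finset.sum_le_sum fun y _ => hterm x y)
      ⟨x0, Finset.mem_univ _, Finset.sum_lt_sum (fun y _ => hterm x0 y)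
        ⟨y0, Finset.mem_univ _, ?_⟩⟩
    simp only [if_pos hx0E]
    rw [hsq x0]
    exact edge_lt19 t (p0 x0 y0) (p1 x0 y0) (∑ z : X, p0 x0 z) (∑ z : X, p1 x0 z) (v0 x0 y0) ht0 ht1
      ((hp0.2.2.1 x0 y0).2 hx0E) ((hp1.2.2.1 x0 y0).2 hx0E) (hs0 x0) (hs1 x0)
      ((hv0.2 x0 y0).2 hx0E) hx0ne
end
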